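/- arXiv:0912.5169 — 3 statements merged into one kernel-verified Lean document; each statement's English description precedes it below -/
import Mathlib

section
/- Let f(u,v) = 2 - u² + v - uv. If z, w ∈ S^1 satisfy f(z,w) = 0, then Re(z) = (1 - √57)/8. -/
/-!
From `f(z, w) = 0` we get `w (1 - z) = z² - 2`, so `|w| = 1` forces `|1 - z| = |z² - 2|`.
For `z` on the unit circle with `x = Re z`, both sides are polynomials in `x`:
`|1 - z|² = 2 - 2x` and, since `z²` is again unitary with `Re z² = 2x² - 1`, `|z² - 2|² = 9 - 8x²`.
Hence `8x² - 2x - 7 = 0`, whose roots are `(1 ± √57)/8`; the larger one exceeds `1`.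
-/

open Complex

theorem Complex.normSq_sub_ofReal_of_norm_eq_one {z : ℂ} (hz : ‖z‖ = 1) (c : ℝ) :
    normSq (z - c) = 1 - 2 * c * z.re + c ^ 2 := by
  have hz2 := sq_norm_sub_sq_re z
  rw [hz] at hz2
  rw [normSq_apply]
  simp only [sub_re, sub_im, ofReal_re, ofReal_im]
  linear_combination -hz2

theorem Complex.re_sq_of_norm_eq_one {z : ℂ} (hz : ‖z‖ = 1) : (z ^ 2).re = 2 * z.re ^ 2 - 1 := by
  have hz2 := sq_norm_sub_sq_re z
  rw [hz] at hz2
  rw [sq, mul_re]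
  linear_combination hz2

theorem eq_of_eight_mul_sq_sub_two_mul_sub_seven {x : ℝ} (hx : 8 * x ^ 2 - 2 * x - 7 = 0)
    (hx1 : x ≤ 1) : x = (1 - √57) / 8 := by
  have h57 : √57 ^ 2 = 57 := Real.sq_sqrt (by norm_num)
  have h7 : 7 < √57 := by nlinarith [Real.sqrt_nonneg 57]
  have hfac : (x - (1 - √57) / 8) * (x - (1 + √57) / 8) = 0 := by
    linear_combination hx / 8 - h57 / 64
  rcases mul_eq_zero.mp hfac with h | h <;> linarith

theorem unitary_zero_re_of_two_sub_usq_add_v_sub_uv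
    (z w : ℂ) (hz : ‖z‖ = 1) (hw : ‖w‖ = 1)
    (hf : 2 - z ^ 2 + w - z * w = 0) :
    z.re = (1 - Real.sqrt 57) / 8 := by
  have hnorm : ‖z - 1‖ = ‖z ^ 2 - 2‖ := by
    have hfactor : w * (1 - z) = z ^ 2 - 2 := by linear_combination hf
    rw [← hfactor, norm_mul, hw, one_mul, norm_sub_rev]
  have hnormSq : normSq (z - (1 : ℝ)) = normSq (z ^ 2 - (2 : ℝ)) := by
    rw [← Complex.sq_norm, ← Complex.sq_norm]; push_cast; rw [hnorm]
  have hz2 : ‖z ^ 2‖ = 1 := by rw [norm_pow, hz, one_pow]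
  rw [normSq_sub_ofReal_of_norm_eq_one hz, normSq_sub_ofReal_of_norm_eq_one hz2,
    re_sq_of_norm_eq_one hz] at hnormSq
  refine eq_of_eight_mul_sq_sub_two_mul_sub_seven (by linear_combination hnormSq) ?_
  simpa [hz] using re_le_norm z
end

section
/- Let g(u) = u⁴ - 3u³ + 3u + 3. Then |g(z)| ≥ 2 for every z ∈ S^1. -/
/-!
On the unit circle `conj z = z⁻¹`, so `‖g z‖² = g z * g z⁻¹`, and this self-reciprocal Laurent
polynomial is a polynomial in `t = z + z⁻¹ = 2 Re z`, namely `4 + 3 (t² - t - 4)²`.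
-/

open ComplexConjugate

theorem quartic_mul_quartic_inv {K : Type*} [Field K] {z : K} (hz : z ≠ 0) :
    (z ^ 4 - 3 * z ^ 3 + 3 * z + 3) * (z⁻¹ ^ 4 - 3 * z⁻¹ ^ 3 + 3 * z⁻¹ + 3) =
      4 + 3 * ((z + z⁻¹) ^ 2 - (z + z⁻¹) - 4) ^ 2 := by
  field_simp
  ring

theorem sq_norm_quartic_of_norm_eq_one {z : ℂ} (hz : ‖z‖ = 1) :
    ‖z ^ 4 - 3 * z ^ 3 + 3 * z + 3‖ ^ 2 = 4 + 3 * ((2 * z.re) ^ 2 - 2 * z.re - 4) ^ 2 := by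
  have hconj : conj z = z⁻¹ := (RCLike.inv_eq_conj hz).symm
  have hz0 : z ≠ 0 := norm_ne_zero_iff.mp (hz ▸ one_ne_zero)
  have h := Complex.mul_conj (z ^ 4 - 3 * z ^ 3 + 3 * z + 3)
  simp only [map_add, map_sub, map_mul, map_pow, map_ofNat, hconj, quartic_mul_quartic_inv hz0] at h
  rw [← hconj, Complex.add_conj] at h
  rw [← Complex.normSq_eq_norm_sq]
  exact_mod_cast h.symm

theorem abs_g_ge_two_on_circle (z : ℂ) (hz : ‖z‖ = 1) :
    2 ≤ ‖z ^ 4 - 3 * z ^ 3 + 3 * z + 3‖ := by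
  have h : (2 : ℝ) ^ 2 ≤ ‖z ^ 4 - 3 * z ^ 3 + 3 * z + 3‖ ^ 2 := by
    rw [sq_norm_quartic_of_norm_eq_one hz]
    linarith [sq_nonneg ((2 * z.re) ^ 2 - 2 * z.re - 4)]
  exact le_of_pow_le_pow_left₀ two_ne_zero (norm_nonneg _) h
end

section
/- Let ξ be a real root of t⁴ + t³ - 2t² + t + 1 and let η = s(ξ) where s(t) = 2t/(1+t²) + i(1-t²)/(1+t²). Then η ∈ S^1 and g(η) = 2·conj(η), where g(u) = u⁴ - 3u³ + 3u + 3; in particular |g(η)| = 2. -/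
/-!
The point `η = s(ξ)` lies on the unit circle, so `conj η = η⁻¹` and `η + conj η = 4ξ/(1+ξ²)`.
Both quartics are palindromic: dividing `ξ⁴ + ξ³ - 2ξ² + ξ + 1` by `ξ²` shows that the trace
`c = η + η⁻¹` satisfies `c² - c - 4 = 0`, which makes `η` a root of the palindromic quartic
`q(u) = u⁴ - u³ - 2u² - u + 1`. Finally `u · g(u) - 2 = (u - 2) q(u)`, so `g(η) = 2η⁻¹ = 2 conj η`.
-/

open Complex ComplexConjugate

section CommRing

variable {R : Type*} [CommRing R] {u v : R}

theorem palindromic_quartic_eq_zero_of_mul_eq_one (huv : u * v = 1)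
    (h : (u + v) ^ 2 - (u + v) - 4 = 0) : u ^ 4 - u ^ 3 - 2 * u ^ 2 - u + 1 = 0 := by
  linear_combination u ^ 2 * h + (u - 1 - 2 * u ^ 2 - u * v) * huv

theorem quartic_eq_two_mul_of_mul_eq_one (huv : u * v = 1)
    (hq : u ^ 4 - u ^ 3 - 2 * u ^ 2 - u + 1 = 0) : u ^ 4 - 3 * u ^ 3 + 3 * u + 3 = 2 * v := by
  linear_combination v * (u - 2) * hq - (u ^ 4 - 3 * u ^ 3 + 3 * u + 3) * huv

end CommRing

theorem sq_sub_sub_four_eq_zero_of_palindromic_root {ξ : ℝ}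
    (hξ : ξ ^ 4 + ξ ^ 3 - 2 * ξ ^ 2 + ξ + 1 = 0) :
    (4 * ξ / (1 + ξ ^ 2)) ^ 2 - 4 * ξ / (1 + ξ ^ 2) - 4 = 0 := by
  field_simp
  linear_combination -4 * hξ

/-- The parametrization `s` of the paper. -/
noncomputable def circleParam (t : ℝ) : ℂ :=
  (2 * t / (1 + t ^ 2) : ℝ) + I * ((1 - t ^ 2) / (1 + t ^ 2) : ℝ)

namespace circleParam

theorem re (t : ℝ) : (circleParam t).re = 2 * t / (1 + t ^ 2) := by
  simp only [circleParam, add_re, mul_re, ofReal_re, ofReal_im, I_re, I_im]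
  ring

theorem im (t : ℝ) : (circleParam t).im = (1 - t ^ 2) / (1 + t ^ 2) := by
  simp only [circleParam, add_im, mul_im, ofReal_re, ofReal_im, I_re, I_im]
  ring

theorem normSq_eq_one (t : ℝ) : normSq (circleParam t) = 1 := by
  rw [normSq_apply, re, im]
  field_simp
  ring

theorem norm_eq_one (t : ℝ) : ‖circleParam t‖ = 1 := by
  rw [← pow_eq_one_iff_of_nonneg (norm_nonneg _) two_ne_zero, ← normSq_eq_norm_sq, normSq_eq_one]

theorem mul_conj_eq_one (t : ℝ) : circleParam t * conj (circleParam t) = 1 := by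
  rw [mul_conj, normSq_eq_one, ofReal_one]

theorem add_conj_eq (t : ℝ) :
    circleParam t + conj (circleParam t) = (4 * t / (1 + t ^ 2) : ℝ) := by
  rw [add_conj, re]
  push_cast
  ring

end circleParam

open Complex in
theorem g_eta_eq_two_conj_eta
    (ξ : ℝ) (hξ : ξ ^ 4 + ξ ^ 3 - 2 * ξ ^ 2 + ξ + 1 = 0)
    (η : ℂ)
    (hη : η = (2 * ξ / (1 + ξ ^ 2) : ℝ) + I * ((1 - ξ ^ 2) / (1 + ξ ^ 2) : ℝ)) :
    ‖η‖ = 1 ∧ η ^ 4 - 3 * η ^ 3 + 3 * η + 3 = 2 * (starRingEnd ℂ) η ∧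
      ‖η ^ 4 - 3 * η ^ 3 + 3 * η + 3‖ = 2 := by
  change η = circleParam ξ at hη
  subst hη
  have htrace : (circleParam ξ + conj (circleParam ξ)) ^ 2
      - (circleParam ξ + conj (circleParam ξ)) - 4 = 0 := by
    rw [circleParam.add_conj_eq]
    exact_mod_cast sq_sub_sub_four_eq_zero_of_palindromic_root hξ
  have hg := quartic_eq_two_mul_of_mul_eq_one (circleParam.mul_conj_eq_one ξ)
    (palindromic_quartic_eq_zero_of_mul_eq_one (circleParam.mul_conj_eq_one ξ) htrace)
  refine ⟨circleParam.norm_eq_one ξ, hg, ?_⟩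
  rw [hg, norm_mul, norm_conj, circleParam.norm_eq_one]
  norm_num
end
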